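/- Let 1 < p < N, let Ω be a bounded domain of ℝ^N with diameter D, let κ > 0 and β₀ > β ≥ 1. Let ω be a nonnegative bounded Borel measure on Ω such that W_{1,p}^{2D}[ω](x) < ∞ for a.e. x ∈ Ω. Then for every ε > 0 and every integer n ≥ 1 there exists a constant c_{ε,n} > 0 (depending on ε, n, N, p, β, β₀, κ, D) such that ( n + κ·W_{1,p}^{2D}[ n·(1_Ω dx + ω) ](x) )^β ≤ c_{ε,n} + ε ( W_{1,p}^{2D}[ω](x) )^{β₀} for a.e. x ∈ Ω, where n·(1_Ω dx + ω) denotes n times the sum of Lebesgue measure restricted to Ω and the measure ω. -/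

import Mathlib

open MeasureTheory Metric Set
open scoped ENNReal

/-- Truncated Wolff potential `W_{1,p}^R[ω](x) = ∫_0^R (r^{p-N} ω(B(x,r)))^{1/(p-1)} dr/r`. -/
noncomputable def wolffPotential (N : ℕ) (p R : ℝ)
    (ω : Measure (EuclideanSpace ℝ (Fin N))) (x : EuclideanSpace ℝ (Fin N)) : ℝ≥0∞ :=
  ∫⁻ r in Ioo (0:ℝ) R,
    (ENNReal.ofReal (r ^ (p - (N:ℝ))) * ω (ball x r)) ^ (1/(p-1)) / ENNReal.ofReal r

/-- Maximal fractional operator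
`M_{p,R}^η[ω](x) = sup_{0<r<R} ω(B(x,r)) / (r^{N-p} h_η(r))`,
where `h_η(r) = min((−ln r)^{−η}, (ln 2)^{−η})`. -/
noncomputable def maxFracOp (N : ℕ) (p R η : ℝ)
    (ω : Measure (EuclideanSpace ℝ (Fin N))) (x : EuclideanSpace ℝ (Fin N)) : ℝ≥0∞ :=
  ⨆ r ∈ Ioo (0:ℝ) R,
    ω (ball x r) /
      ENNReal.ofReal (r ^ ((N:ℝ) - p) * min ((-Real.log r) ^ (-η)) ((Real.log 2) ^ (-η)))

/-!
Splitting `n • (1_Ω dx + ω)` costs only a multiplicative constant in the Wolff potential, and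
the Wolff potential of Lebesgue measure is a finite constant, independent of the point by
translation invariance: `|B(x,r)| ∝ r^N` turns its integrand into a multiple of
`r^{p/(p-1) - 1}`. So the left side is at most `(A + B W[ω](x))^β` with constants `A`, `B`, and
since `β < β₀` the power `t^β₀` eventually dominates `(A + B t)^β` by any factor `1/ε`; the
bounded range of `t` goes into `c`.
-/

namespace Real

variable {A B β β₀ ε : ℝ}

lemma exists_mul_rpow_le_add_mul_rpow {K : ℝ} (hβ : 0 ≤ β) (hββ₀ : β < β₀) (hε : 0 < ε)
    (hK : 0 ≤ K) : ∃ c, 0 < c ∧ ∀ t, 0 ≤ t → K * t ^ β ≤ c + ε * t ^ β₀ := by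
  have hδ : 0 < β₀ - β := sub_pos.2 hββ₀
  set T := (K / ε) ^ (β₀ - β)⁻¹
  refine ⟨K * T ^ β + 1, by positivity, fun t ht => ?_⟩
  have hT : 0 ≤ K * T ^ β := by positivity
  rcases le_total t T with htT | hTt
  · have : K * t ^ β ≤ K * T ^ β := by gcongr
    have : 0 ≤ ε * t ^ β₀ := by positivity
    linarith
  · have hK_le : K ≤ ε * t ^ (β₀ - β) := by
      have := rpow_le_rpow (by positivity) hTt hδ.le
      rwa [rpow_inv_rpow (by positivity) hδ.ne', div_le_iff₀' hε] at this
    have : K * t ^ β ≤ ε * t ^ β₀ := calc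
      K * t ^ β ≤ ε * t ^ (β₀ - β) * t ^ β := by gcongr
      _ = ε * t ^ β₀ := by
        rw [mul_assoc, ← rpow_add' ht (by linarith), sub_add_cancel]
    linarith

lemma add_mul_rpow_le {t : ℝ} (hA : 0 ≤ A) (hB : 0 ≤ B) (ht : 0 ≤ t) (hβ : 0 ≤ β) :
    (A + B * t) ^ β ≤ (A + B) ^ β * (1 + t ^ β) := by
  rcases le_total t 1 with ht1 | ht1
  · calc (A + B * t) ^ β ≤ (A + B) ^ β := by gcongr; nlinarith
      _ ≤ (A + B) ^ β * (1 + t ^ β) :=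
        le_mul_of_one_le_right (by positivity) (by linarith [rpow_nonneg ht β])
  · calc (A + B * t) ^ β ≤ ((A + B) * t) ^ β := by gcongr; nlinarith
      _ = (A + B) ^ β * t ^ β := mul_rpow (by positivity) ht
      _ ≤ (A + B) ^ β * (1 + t ^ β) := by gcongr; linarith

lemma exists_add_mul_rpow_le (hβ : 0 ≤ β) (hββ₀ : β < β₀) (hε : 0 < ε) (hA : 0 ≤ A)
    (hB : 0 ≤ B) : ∃ c, 0 < c ∧ ∀ t, 0 ≤ t → (A + B * t) ^ β ≤ c + ε * t ^ β₀ := by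
  obtain ⟨c, hc, hle⟩ :=
    exists_mul_rpow_le_add_mul_rpow hβ hββ₀ hε (by positivity : 0 ≤ (A + B) ^ β)
  refine ⟨(A + B) ^ β + c, by positivity, fun t ht => ?_⟩
  have := hle t ht
  calc (A + B * t) ^ β ≤ (A + B) ^ β * (1 + t ^ β) := add_mul_rpow_le hA hB ht hβ
    _ ≤ (A + B) ^ β + c + ε * t ^ β₀ := by linarith

end Real

lemma ENNReal.exists_add_mul_rpow_le {A B : ℝ≥0∞} {β β₀ ε : ℝ} (hβ : 0 ≤ β) (hββ₀ : β < β₀)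
    (hε : 0 < ε) (hA : A ≠ ⊤) (hB : B ≠ ⊤) :
    ∃ c : ℝ, 0 < c ∧ ∀ t : ℝ≥0∞,
      (A + B * t) ^ β ≤ ENNReal.ofReal c + ENNReal.ofReal ε * t ^ β₀ := by
  obtain ⟨c, hc, hle⟩ := Real.exists_add_mul_rpow_le hβ hββ₀ hε A.toReal_nonneg B.toReal_nonneg
  refine ⟨c, hc, fun t => ?_⟩
  rcases eq_or_ne t ⊤ with rfl | ht
  · simp [ENNReal.top_rpow_of_pos (hβ.trans_lt hββ₀), hε]
  rw [← ENNReal.ofReal_toReal hA, ← ENNReal.ofReal_toReal hB, ← ENNReal.ofReal_toReal ht,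
    ← ENNReal.ofReal_mul toReal_nonneg, ← ENNReal.ofReal_add toReal_nonneg (by positivity),
    ENNReal.ofReal_rpow_of_nonneg (by positivity) hβ,
    ENNReal.ofReal_rpow_of_nonneg toReal_nonneg (hβ.trans hββ₀.le),
    ← ENNReal.ofReal_mul hε.le, ← ENNReal.ofReal_add hc.le (by positivity)]
  exact ENNReal.ofReal_le_ofReal (hle _ toReal_nonneg)

section WolffPotential

variable {N : ℕ} {p R : ℝ}

lemma measurable_wolffPotential_integrand (μ : Measure (EuclideanSpace ℝ (Fin N)))
    (x : EuclideanSpace ℝ (Fin N)) :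
    Measurable fun r : ℝ =>
      (ENNReal.ofReal (r ^ (p - (N:ℝ))) * μ (ball x r)) ^ (1/(p-1)) / ENNReal.ofReal r := by
  have hball : Measurable fun r : ℝ => μ (ball x r) :=
    Monotone.measurable fun _ _ hrs => measure_mono (ball_subset_ball hrs)
  exact (((measurable_id.pow_const _).ennreal_ofReal.mul hball).pow_const _).div
    measurable_id.ennreal_ofReal

lemma wolffPotential_mono (hp : 1 ≤ p) {μ ν : Measure (EuclideanSpace ℝ (Fin N))} (hμν : μ ≤ ν)
    (x : EuclideanSpace ℝ (Fin N)) :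
    wolffPotential N p R μ x ≤ wolffPotential N p R ν x := by
  have : 0 ≤ 1 / (p - 1) := one_div_nonneg.2 (sub_nonneg.2 hp)
  refine lintegral_mono fun r => ?_
  gcongr

lemma wolffPotential_smul (hp : 1 ≤ p) (c : ℝ≥0∞) (μ : Measure (EuclideanSpace ℝ (Fin N)))
    (x : EuclideanSpace ℝ (Fin N)) :
    wolffPotential N p R (c • μ) x = c ^ (1/(p-1)) * wolffPotential N p R μ x := by
  have hq : 0 ≤ 1 / (p - 1) := one_div_nonneg.2 (sub_nonneg.2 hp)
  rw [wolffPotential, wolffPotential,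
    ← lintegral_const_mul _ (measurable_wolffPotential_integrand μ x)]
  congr 1 with r
  rw [Measure.smul_apply, smul_eq_mul, mul_left_comm, ENNReal.mul_rpow_of_nonneg _ _ hq,
    mul_div_assoc]

/-- `LpAddConst (ofReal q)⁻¹` is the constant of the quasi-triangle inequality
`(a + b) ^ q ≤ K * (a ^ q + b ^ q)`, namely `max 1 (2 ^ (q - 1))`. -/
lemma wolffPotential_add_le (hp : 1 ≤ p) (μ ν : Measure (EuclideanSpace ℝ (Fin N)))
    (x : EuclideanSpace ℝ (Fin N)) :
    wolffPotential N p R (μ + ν) x ≤ ENNReal.LpAddConst (ENNReal.ofReal (1/(p-1)))⁻¹ *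
      (wolffPotential N p R μ x + wolffPotential N p R ν x) := by
  have hq : 0 ≤ 1 / (p - 1) := one_div_nonneg.2 (sub_nonneg.2 hp)
  rw [wolffPotential, wolffPotential, wolffPotential,
    ← lintegral_add_left (measurable_wolffPotential_integrand μ x),
    ← lintegral_const_mul' _ _ (ENNReal.LpAddConst_lt_top _).ne]
  refine lintegral_mono fun r => ?_
  rw [Measure.add_apply, mul_add, ← ENNReal.add_div, ← mul_div_assoc]
  gcongr
  exact ENNReal.rpow_add_le_mul_rpow_add_rpow' _ _ hq

lemma wolffPotential_volume_apply (x : EuclideanSpace ℝ (Fin N)) :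
    wolffPotential N p R volume x = wolffPotential N p R volume 0 := by
  simp_rw [wolffPotential, Measure.addHaar_ball_center]

lemma wolffPotential_volume_lt_top (hp : 1 < p) (x : EuclideanSpace ℝ (Fin N)) :
    wolffPotential N p R volume x < ⊤ := by
  set q := 1 / (p - 1)
  have hq : 0 < q := one_div_pos.2 (sub_pos.2 hp)
  set V := volume (ball (0 : EuclideanSpace ℝ (Fin N)) 1)
  have hV : V ^ q ≠ ⊤ := ENNReal.rpow_ne_top_of_nonneg hq.le measure_ball_lt_top.ne
  have hball : ∀ r ∈ Ioo (0:ℝ) R,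
      (ENNReal.ofReal (r ^ (p - (N:ℝ))) * volume (ball x r)) ^ q / ENNReal.ofReal r =
        V ^ q * ENNReal.ofReal (r ^ (p * q - 1)) := by
    rintro r ⟨hr, -⟩
    have hrN : r ^ (p - (N:ℝ)) * r ^ N = r ^ p := by
      rw [← Real.rpow_natCast, ← Real.rpow_add hr, sub_add_cancel]
    rw [Measure.addHaar_ball_of_pos volume x hr, finrank_euclideanSpace_fin, ← mul_assoc,
      ← ENNReal.ofReal_mul (by positivity), hrN, ENNReal.mul_rpow_of_nonneg _ _ hq.le,
      ENNReal.ofReal_rpow_of_pos (by positivity), ← Real.rpow_mul hr.le, mul_comm, mul_div_assoc,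
      ← ENNReal.ofReal_div_of_pos hr, Real.rpow_sub hr, Real.rpow_one]
  have hint : IntegrableOn (fun r : ℝ => r ^ (p * q - 1)) (Ioo 0 R) :=
    (intervalIntegral.intervalIntegrable_rpow' (a := 0) (b := R)
      (by nlinarith [mul_pos (by linarith : (0:ℝ) < p) hq])).def'.mono_set
      (Ioo_subset_Ioc_self.trans Ioc_subset_uIoc)
  rw [wolffPotential, setLIntegral_congr_fun measurableSet_Ioo hball, lintegral_const_mul' _ _ hV]
  exact ENNReal.mul_lt_top hV.lt_top hint.setLIntegral_lt_top

end WolffPotential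

theorem wolff_plus_lebesgue_pow_le'_general (N : ℕ) (p β β₀ κ D : ℝ)
    (hp : 1 < p) (hβ : 1 ≤ β) (hββ₀ : β < β₀) :
    ∀ ε : ℝ, 0 < ε → ∀ n : ℕ, 1 ≤ n → ∃ c : ℝ, 0 < c ∧
      ∀ Ω : Set (EuclideanSpace ℝ (Fin N)),
        IsOpen Ω → IsConnected Ω → Bornology.IsBounded Ω → Metric.diam Ω = D →
        ∀ ω : Measure (EuclideanSpace ℝ (Fin N)), IsFiniteMeasure ω → ω Ωᶜ = 0 →
          (∀ᵐ x ∂(volume.restrict Ω), wolffPotential N p (2 * D) ω x < ⊤) →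
          ∀ᵐ x ∂(volume.restrict Ω),
            ((n : ℝ≥0∞) + ENNReal.ofReal κ *
                wolffPotential N p (2 * D) ((n : ℝ≥0∞) • (volume.restrict Ω + ω)) x) ^ β
              ≤ ENNReal.ofReal c + ENNReal.ofReal ε *
                  wolffPotential N p (2 * D) ω x ^ β₀ := by
  intro ε hε n _
  set q := 1 / (p - 1)
  set K := ENNReal.LpAddConst (ENNReal.ofReal q)⁻¹
  set S := wolffPotential N p (2 * D) volume 0
  set C := ENNReal.ofReal κ * ((n : ℝ≥0∞) ^ q * K)
  have hC : C ≠ ⊤ := by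
    have : (n : ℝ≥0∞) ^ q ≠ ⊤ :=
      ENNReal.rpow_ne_top_of_nonneg (one_div_nonneg.2 (by linarith)) (ENNReal.natCast_ne_top n)
    have := (ENNReal.LpAddConst_lt_top (ENNReal.ofReal q)⁻¹).ne
    finiteness
  have hS : S ≠ ⊤ := (wolffPotential_volume_lt_top hp 0).ne
  obtain ⟨c, hc, hle⟩ := ENNReal.exists_add_mul_rpow_le (A := n + C * S) (B := C)
    (by linarith) hββ₀ hε (by finiteness) hC
  refine ⟨c, hc, fun Ω _ _ _ _ ω _ _ _ => ae_of_all _ fun x => ?_⟩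
  set W := wolffPotential N p (2 * D) ω x
  have hvol : wolffPotential N p (2 * D) (volume.restrict Ω) x ≤ S :=
    (wolffPotential_mono hp.le Measure.restrict_le_self x).trans (wolffPotential_volume_apply x).le
  have hsum : wolffPotential N p (2 * D) ((n : ℝ≥0∞) • (volume.restrict Ω + ω)) x ≤
      (n : ℝ≥0∞) ^ q * (K * (S + W)) := by
    rw [wolffPotential_smul hp.le]
    gcongr
    exact (wolffPotential_add_le hp.le _ _ x).trans (by gcongr)
  calc _ ≤ ((n : ℝ≥0∞) + ENNReal.ofReal κ * ((n : ℝ≥0∞) ^ q * (K * (S + W)))) ^ β := by gcongr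
    _ = (n + C * S + C * W) ^ β := by simp only [C]; congr 1; ring
    _ ≤ _ := hle W

/-- let `β₀ > β ≥ 1` and `κ > 0`. For every `ε > 0` and integer `n ≥ 1` there
is `c = c_{ε,n} > 0` (depending on `ε,n,N,p,β,β₀,κ,D`) such that, for every bounded domain
`Ω` of diameter `D` and every finite nonnegative measure `ω` supported in `Ω` whose Wolff
potential `W_{1,p}^{2D}[ω]` is finite a.e. in `Ω`,
`(n + κ W_{1,p}^{2D}[n(1_Ω dx + ω)](x))^β ≤ c_{ε,n} + ε W_{1,p}^{2D}[ω](x)^{β₀}`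
for a.e. `x ∈ Ω`. -/
theorem wolff_plus_lebesgue_pow_le' (N : ℕ) (p β β₀ κ D : ℝ)
    (hp : 1 < p) (hpN : p < N) (hβ : 1 ≤ β) (hββ₀ : β < β₀) (hκ : 0 < κ) :
    ∀ ε : ℝ, 0 < ε → ∀ n : ℕ, 1 ≤ n → ∃ c : ℝ, 0 < c ∧
      ∀ Ω : Set (EuclideanSpace ℝ (Fin N)),
        IsOpen Ω → IsConnected Ω → Bornology.IsBounded Ω → Metric.diam Ω = D →
        ∀ ω : Measure (EuclideanSpace ℝ (Fin N)), IsFiniteMeasure ω → ω Ωᶜ = 0 →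
          (∀ᵐ x ∂(volume.restrict Ω), wolffPotential N p (2 * D) ω x < ⊤) →
          ∀ᵐ x ∂(volume.restrict Ω),
            ((n : ℝ≥0∞) + ENNReal.ofReal κ *
                wolffPotential N p (2 * D) ((n : ℝ≥0∞) • (volume.restrict Ω + ω)) x) ^ β
              ≤ ENNReal.ofReal c + ENNReal.ofReal ε *
                  wolffPotential N p (2 * D) ω x ^ β₀ :=
  wolff_plus_lebesgue_pow_le'_general N p β β₀ κ D hp hβ hββ₀
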